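/- For every integer n ≥ 0, the identity of real polynomials ((2n+1)x² − 3x − 2n)U_{2n}(x) + (x+1)(U_{2n−1}(x) + 1) = (x−1)·(U_n(x) + U_{n−1}(x))·S_{2n}(x) holds; that is, φ_{2n}(x) = (x−1)·U^e_{2n}(x)·S_{2n}(x). -/
import Mathlib


open Polynomial Polynomial.Chebyshev

/-- `S_{2n}(x) = (2nx + x + 2n − 1)Uₙ(x) − (2nx + 3x + 2n + 1)U_{n-1}(x)`. -/
noncomputable def S2n (n : ℕ) : Polynomial ℝ :=
  (Polynomial.C (2 * (n : ℝ) + 1) * Polynomial.X + Polynomial.C (2 * (n : ℝ) - 1)) *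
      U ℝ (n : ℤ) -
    (Polynomial.C (2 * (n : ℝ) + 3) * Polynomial.X + Polynomial.C (2 * (n : ℝ) + 1)) *
      U ℝ ((n : ℤ) - 1)

private lemma U_double (n : ℕ) :
    U ℝ (2 * (n : ℤ)) = U ℝ (n : ℤ) ^ 2 - U ℝ ((n : ℤ) - 1) ^ 2 ∧
    U ℝ (2 * (n : ℤ) - 1) = 2 * U ℝ ((n : ℤ) - 1) * (U ℝ (n : ℤ) - X * U ℝ ((n : ℤ) - 1)) := by
  induction n with
  | zero => simp
  | succ n ih =>
    obtain ⟨h1, h2⟩ := ih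
    have hA := U_add_one ℝ (2 * (n : ℤ))
    have hB := U_add_two ℝ (2 * (n : ℤ))
    have hC := U_add_one ℝ (n : ℤ)
    push_cast
    constructor
    · rw [show (2 : ℤ) * ((n : ℤ) + 1) = 2 * (n : ℤ) + 2 from by ring,
        show ((n : ℤ) + 1) - 1 = (n : ℤ) from by ring, hB, hA, h1, h2, hC]
      ring
    · rw [show (2 : ℤ) * ((n : ℤ) + 1) - 1 = 2 * (n : ℤ) + 1 from by ring,
        show ((n : ℤ) + 1) - 1 = (n : ℤ) from by ring, hA, h1, h2, hC]
      ring

private lemma U_pell (n : ℕ) :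
    U ℝ (n : ℤ) ^ 2 + U ℝ ((n : ℤ) - 1) ^ 2 - 2 * X * U ℝ (n : ℤ) * U ℝ ((n : ℤ) - 1) = 1 := by
  induction n with
  | zero => simp
  | succ n ih =>
    have hC := U_add_one ℝ (n : ℤ)
    push_cast
    rw [show ((n : ℤ) + 1) - 1 = (n : ℤ) from by ring, hC]
    linear_combination ih

/-- For every `n ≥ 0`,
`φ_{2n}(x) = ((2n+1)x² − 3x − 2n)U_{2n}(x) + (x+1)(U_{2n-1}(x) + 1)
           = (x−1)·(Uₙ(x) + U_{n-1}(x))·S_{2n}(x)`,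
i.e. `φ_{2n} = (x−1)·U^e_{2n}·S_{2n}` as real polynomials. -/
theorem phi_even_factorization (n : ℕ) :
    (Polynomial.C (2 * (n : ℝ) + 1) * Polynomial.X ^ 2 - Polynomial.C (3 : ℝ) * Polynomial.X -
        Polynomial.C (2 * (n : ℝ))) * U ℝ (2 * (n : ℤ)) +
      (Polynomial.X + 1) * (U ℝ (2 * (n : ℤ) - 1) + 1) =
    (Polynomial.X - 1) * (U ℝ (n : ℤ) + U ℝ ((n : ℤ) - 1)) * S2n n := by
  obtain ⟨h1, h2⟩ := U_double n
  rw [S2n, h1, h2]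
  simp only [map_add, map_mul, map_sub, map_one, map_ofNat]
  linear_combination (-(X + 1) : Polynomial ℝ) * U_pell n
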